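/- Let B be a K-acceptor, q a control state of B, and x, x' ∈ ℝ≥0 with x ≡^K x'. Then for every timed word w: w ∈ L(q, x) if and only if τ_{x→x'}(w) ∈ L(q, x'), where L(q, ν) is the set of timed words admitting a run of B from configuration (q, ν) to a final state. -/

import Mathlib

open scoped NNReal Classical

namespace IRTA

/-- A timestamp is a finite sequence of non-negative reals. -/
abbrev Timestamp : Type := List ℝ≥0

/-- A timed word is a finite sequence of (delay, letter) pairs. -/
abbrev TimedWord (A : Type) : Type := List (ℝ≥0 × A)

/-- Fractional part of a non-negative real. -/
noncomputable def fracPart (x : ℝ≥0) : ℝ≥0 := x - (⌊x⌋₊ : ℝ≥0)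

/-- `x` is a natural-number value. -/
def IsNatVal (x : ℝ≥0) : Prop := ∃ m : ℕ, x = (m : ℝ≥0)

/-- Region equivalence `≡^K`. -/
def RegEq (K : ℕ) (x y : ℝ≥0) : Prop :=
  (⌊x⌋₊ = ⌊y⌋₊ ∧ (fracPart x = 0 ↔ fracPart y = 0)) ∨ ((K : ℝ≥0) < x ∧ (K : ℝ≥0) < y)

/-- One step of the (greedy) clock evolution: reset whenever the value is an
integer between `0` and `K`. -/
noncomputable def resetStep (K : ℕ) (v : ℝ≥0) : ℝ≥0 :=
  if ∃ m : ℕ, m ≤ K ∧ v = (m : ℝ≥0) then 0 else v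

/-- Auxiliary function computing `c^K` with accumulator `v`. -/
noncomputable def cKAux (K : ℕ) : ℝ≥0 → Timestamp → ℝ≥0
  | v, [] => v
  | v, t :: d => cKAux K (resetStep K (v + t)) d

/-- `c^K(d)`: the sum of the delays after the last integral position of `d`. -/
noncomputable def cK (K : ℕ) (d : Timestamp) : ℝ≥0 := cKAux K 0 d

/-- `c^K` of a timed word is `c^K` of its timestamp. -/
noncomputable def cKW {A : Type} (K : ℕ) (w : TimedWord A) : ℝ≥0 :=
  cK K (w.map Prod.fst)

/-- `c^K_⊤` : `c^K` truncated at `K`. -/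
noncomputable def cKTop {A : Type} (K : ℕ) (w : TimedWord A) : WithTop ℝ≥0 :=
  if cKW K w ≤ (K : ℝ≥0) then ((cKW K w : ℝ≥0) : WithTop ℝ≥0) else ⊤

/-! ### Clock constraints and one-clock timed automata -/

/-- Clock constraints `φ ::= x < m | m < x | x = m | φ ∧ φ`. -/
inductive CC : Type where
  | lt : ℕ → CC
  | gt : ℕ → CC
  | eq : ℕ → CC
  | and : CC → CC → CC

/-- Satisfaction of a clock constraint by a clock value. -/
def CC.sat : CC → ℝ≥0 → Prop
  | .lt m, x => x < (m : ℝ≥0)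
  | .gt m, x => (m : ℝ≥0) < x
  | .eq m, x => x = (m : ℝ≥0)
  | .and φ ψ, x => φ.sat x ∧ ψ.sat x

/-- The largest constant appearing in a clock constraint. -/
def CC.maxConst : CC → ℕ
  | .lt m => m
  | .gt m => m
  | .eq m => m
  | .and φ ψ => max φ.maxConst ψ.maxConst

/-- A transition of a one-clock timed automaton; `reset = true` means the
clock is reset (the `r = 0` case). -/
structure TTrans (Q A : Type) where
  src : Q
  dst : Q
  lab : A
  guard : CC
  reset : Bool

/-- A one-clock timed automaton. -/
structure TA (A : Type) where
  Q : Type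
  init : Q
  final : Set Q
  trans : Set (TTrans Q A)

/-- The automaton has finitely many states and transitions. -/
def TA.IsFinite {A : Type} (M : TA A) : Prop := Finite M.Q ∧ M.trans.Finite

/-- Runs of a one-clock timed automaton between configurations. -/
inductive Steps {A : Type} (M : TA A) : M.Q × ℝ≥0 → TimedWord A → M.Q × ℝ≥0 → Prop
  | nil (c : M.Q × ℝ≥0) : Steps M c [] c
  | cons {q : M.Q} {ν t : ℝ≥0} {a : A} {w : TimedWord A} {c : M.Q × ℝ≥0}
      (θ : TTrans M.Q A) (hθ : θ ∈ M.trans) (hsrc : θ.src = q) (hlab : θ.lab = a)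
      (hg : θ.guard.sat (ν + t))
      (hrest : Steps M (θ.dst, if θ.reset then 0 else ν + t) w c) :
      Steps M (q, ν) ((t, a) :: w) c

/-- The language of `M` from a given configuration. -/
def TA.LangFrom {A : Type} (M : TA A) (c : M.Q × ℝ≥0) : Set (TimedWord A) :=
  {w | ∃ q' : M.Q, ∃ ν' : ℝ≥0, Steps M c w (q', ν') ∧ q' ∈ M.final}

/-- The language of `M` (from the initial configuration). -/
def TA.Lang {A : Type} (M : TA A) : Set (TimedWord A) := M.LangFrom (M.init, 0)

/-- Determinism: distinct transitions with the same source and letter have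
disjoint guards. -/
def TA.Deterministic {A : Type} (M : TA A) : Prop :=
  ∀ θ₁ ∈ M.trans, ∀ θ₂ ∈ M.trans, θ₁ ≠ θ₂ → θ₁.src = θ₂.src → θ₁.lab = θ₂.lab →
    ∀ x : ℝ≥0, ¬ (θ₁.guard.sat x ∧ θ₂.guard.sat x)

/-- Completeness: every timed word admits a run from the initial configuration. -/
def TA.Complete {A : Type} (M : TA A) : Prop :=
  ∀ w : TimedWord A, ∃ c : M.Q × ℝ≥0, Steps M (M.init, 0) w c

/-- A 1-IRTA: every resetting transition has an equality guard. -/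
def TA.IsIRTA {A : Type} (M : TA A) : Prop :=
  ∀ θ ∈ M.trans, θ.reset = true → ∃ m : ℕ, θ.guard = CC.eq m

/-- Guards allowed in a strict 1-IRTA with constant `K`. -/
def StrictGuard (K : ℕ) (φ : CC) : Prop :=
  (∃ m : ℕ, φ = CC.eq m) ∨ (∃ m : ℕ, φ = CC.and (CC.gt m) (CC.lt (m + 1))) ∨ φ = CC.gt K

/-- Strictness with constant `K`: every guard is of one of the allowed forms
and a guard is an equality iff the transition resets. -/
def TA.IsStrict {A : Type} (M : TA A) (K : ℕ) : Prop :=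
  ∀ θ ∈ M.trans, StrictGuard K θ.guard ∧ ((∃ m : ℕ, θ.guard = CC.eq m) ↔ θ.reset = true)

/-- All constants appearing in guards are at most `K`. -/
def TA.MaxConstLE {A : Type} (M : TA A) (K : ℕ) : Prop :=
  ∀ θ ∈ M.trans, θ.guard.maxConst ≤ K

/-- `M` reaches the same control state on reading `u` and `v` from the initial
configuration. -/
def TA.SameState {A : Type} (M : TA A) (u v : TimedWord A) : Prop :=
  ∃ q : M.Q, ∃ ν ν' : ℝ≥0, Steps M (M.init, 0) u (q, ν) ∧ Steps M (M.init, 0) v (q, ν')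

/-- A `K`-acceptor. -/
def IsKAcceptor {A : Type} (M : TA A) (K : ℕ) : Prop :=
  M.IsFinite ∧ M.Complete ∧ M.Deterministic ∧ M.IsIRTA ∧ M.IsStrict K ∧ M.MaxConstLE K ∧
    ∀ u v : TimedWord A, M.SameState u v → RegEq K (cKW K u) (cKW K v)

/-! ### Equivalences on timed words -/

/-- `L`-preservation of a relation on timed words. -/
def LPreserving {A : Type} (L : Set (TimedWord A)) (r : TimedWord A → TimedWord A → Prop) :
    Prop :=
  ∀ u v : TimedWord A, r u v → (u ∈ L ↔ v ∈ L)

/-- `K`-monotonicity of a relation on timed words. -/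
def KMonotonic {A : Type} (K : ℕ) (r : TimedWord A → TimedWord A → Prop) : Prop :=
  ∀ u v : TimedWord A, r u v →
    RegEq K (cKW K u) (cKW K v) ∧
      ∀ (a : A) (t t' : ℝ≥0), RegEq K (cKW K u + t) (cKW K v + t') →
        r (u ++ [(t, a)]) (v ++ [(t', a)])

/-- Finite index: there are finitely many classes `{v | r u v}`. -/
def FiniteIndex {A : Type} (r : TimedWord A → TimedWord A → Prop) : Prop :=
  Set.Finite (Set.range fun u : TimedWord A => {v : TimedWord A | r u v})

/-! ### The rescaling maps -/

/-- The bijection `f_{λ→λ'}` of the open unit interval. -/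
noncomputable def fScale (lam lam' t : ℝ≥0) : ℝ≥0 :=
  if t ≤ lam then (lam' / lam) * t else lam' + ((1 - lam') / (1 - lam)) * (t - lam)

/-- The new delay `t'` computed from the current clock values `y, y'` and delay `t`. -/
noncomputable def tauStep (K : ℕ) (y y' t : ℝ≥0) : ℝ≥0 :=
  if (IsNatVal y ∧ IsNatVal y') ∨ ((K : ℝ≥0) < y ∧ (K : ℝ≥0) < y') then t
  else (⌊t⌋₊ : ℝ≥0) + fScale (1 - fracPart y) (1 - fracPart y') (fracPart t)

/-- Auxiliary rescaling map on timestamps, carrying the current clock values. -/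
noncomputable def tauAux (K : ℕ) : ℝ≥0 → ℝ≥0 → Timestamp → Timestamp
  | _, _, [] => []
  | y, y', t :: d =>
      tauStep K y y' t ::
        tauAux K (resetStep K (y + t)) (resetStep K (y' + tauStep K y y' t)) d

/-- The rescaling map `τ_{x→x'}` on timestamps. -/
noncomputable def tau (K : ℕ) (x x' : ℝ≥0) (d : Timestamp) : Timestamp :=
  tauAux K (resetStep K x) (resetStep K x') d

/-- Auxiliary rescaling map on timed words. -/
noncomputable def tauWAux {A : Type} (K : ℕ) : ℝ≥0 → ℝ≥0 → TimedWord A → TimedWord A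
  | _, _, [] => []
  | y, y', (t, a) :: w =>
      (tauStep K y y' t, a) ::
        tauWAux K (resetStep K (y + t)) (resetStep K (y' + tauStep K y y' t)) w

/-- The rescaling map `τ_{x→x'}` on timed words. -/
noncomputable def tauW {A : Type} (K : ℕ) (x x' : ℝ≥0) (w : TimedWord A) : TimedWord A :=
  tauWAux K (resetStep K x) (resetStep K x') w

/-! ### Residuals and the syntactic equivalence -/

/-- The residual language `u^{-1}L`. -/
def residual {A : Type} (L : Set (TimedWord A)) (u : TimedWord A) : Set (TimedWord A) :=
  {w : TimedWord A | u ++ w ∈ L}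

/-- The syntactic equivalence `≈^{L,K}`. -/
def ApproxLK {A : Type} (L : Set (TimedWord A)) (K : ℕ) (u v : TimedWord A) : Prop :=
  RegEq K (cKW K u) (cKW K v) ∧
    (tauW K (cKW K u) (cKW K v)) '' (residual L u) = residual L v

/-! ### The automaton built from a monotonic equivalence -/

/-- The region guard `φ([t])`. -/
noncomputable def phiOf (K : ℕ) (t : ℝ≥0) : CC :=
  if t ≤ (K : ℝ≥0) then
    (if IsNatVal t then CC.eq ⌊t⌋₊ else CC.and (CC.gt ⌊t⌋₊) (CC.lt (⌊t⌋₊ + 1)))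
  else CC.gt K

/-- The automaton `A_≈` built from an equivalence `s` on timed words. -/
noncomputable def Aapprox {A : Type} (L : Set (TimedWord A)) (K : ℕ)
    (s : Setoid (TimedWord A)) : TA A where
  Q := Quotient s
  init := Quotient.mk s ([] : TimedWord A)
  final := {q : Quotient s | ∃ u : TimedWord A, q = Quotient.mk s u ∧ u ∈ L}
  trans := {θ : TTrans (Quotient s) A |
    ∃ (u : TimedWord A) (a : A) (t : ℝ≥0),
      θ.src = Quotient.mk s u ∧ θ.dst = Quotient.mk s (u ++ [(t, a)]) ∧ θ.lab = a ∧
      θ.guard = phiOf K (cKW K u + t) ∧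
      (θ.reset = true ↔ ∃ m : ℕ, m ≤ K ∧ cKW K u + t = (m : ℝ≥0))}

/-! ### Half-integral and small words -/

/-- Every delay has fractional part `0` or `1/2`. -/
def HalfIntegral {A : Type} (w : TimedWord A) : Prop :=
  ∀ p ∈ w, fracPart p.1 = 0 ∨ fracPart p.1 = 1 / 2

/-- Every delay is `< K + 1`. -/
def SmallWord {A : Type} (K : ℕ) (w : TimedWord A) : Prop :=
  ∀ p ∈ w, p.1 < (K : ℝ≥0) + 1

/-- The delays of `Σ_K`: half-integral values `≤ K + 1/2`. -/
def IsSigmaK (K : ℕ) (t : ℝ≥0) : Prop :=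
  (fracPart t = 0 ∨ fracPart t = 1 / 2) ∧ t ≤ (K : ℝ≥0) + 1 / 2

/-- Words over `Σ_K` (small half-integral words). -/
def SigmaWord {A : Type} (K : ℕ) (w : TimedWord A) : Prop :=
  ∀ p ∈ w, IsSigmaK K p.1



/-! ### `K`-acceptors with their region representatives -/

/-- A `K`-acceptor bundled with the half-integral representative of the
unique region of each state. -/
structure KAcc (A : Type) (K : ℕ) where
  M : TA A
  acc : IsKAcceptor M K
  reg : M.Q → ℝ≥0
  regHalf : ∀ q : M.Q, fracPart (reg q) = 0 ∨ fracPart (reg q) = 1 / 2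
  regLe : ∀ q : M.Q, reg q ≤ (K : ℝ≥0) + 1 / 2
  regSpec : ∀ (w : TimedWord A) (q : M.Q) (x : ℝ≥0),
    Steps M (M.init, 0) w (q, x) → RegEq K x (reg q)

/-- The minimization equivalences `∼^i` on the states of a `K`-acceptor. -/
def simEq {A : Type} {K : ℕ} (B : KAcc A K) : ℕ → B.M.Q → B.M.Q → Prop
  | 0, p, q => B.reg p = B.reg q ∧ (p ∈ B.M.final ↔ q ∈ B.M.final)
  | i + 1, p, q => simEq B i p q ∧
      ∀ (t : ℝ≥0) (a : A), IsSigmaK K t →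
        ∀ θ₁ θ₂ : TTrans B.M.Q A, θ₁ ∈ B.M.trans → θ₂ ∈ B.M.trans →
          θ₁.src = p → θ₂.src = q → θ₁.lab = a → θ₂.lab = a →
          θ₁.guard = phiOf K t → θ₂.guard = phiOf K t →
          simEq B i θ₁.dst θ₂.dst

/-- The quotient automaton `B/∼^m`. -/
noncomputable def quotTA {A : Type} {K : ℕ} (B : KAcc A K) (m : ℕ) : TA A where
  Q := Quot (simEq B m)
  init := Quot.mk (simEq B m) B.M.init
  final := {c : Quot (simEq B m) | ∃ q ∈ B.M.final, c = Quot.mk (simEq B m) q}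
  trans := {θ : TTrans (Quot (simEq B m)) A |
    ∃ θ₀ ∈ B.M.trans,
      θ.src = Quot.mk (simEq B m) θ₀.src ∧ θ.dst = Quot.mk (simEq B m) θ₀.dst ∧
      θ.lab = θ₀.lab ∧ θ.guard = θ₀.guard ∧ θ.reset = θ₀.reset}

/-! ### Observation tables -/

/-- An observation table over `Σ_K`. -/
structure ObsTable (A : Type) (K : ℕ) where
  U1 : Set (TimedWord A)
  E : Set (TimedWord A)
  val : TimedWord A → TimedWord A → Bool
  U1fin : U1.Finite
  Efin : E.Finite
  U1sigma : ∀ u ∈ U1, SigmaWord K u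
  Esigma : ∀ e ∈ E, SigmaWord K e
  epsU1 : ([] : TimedWord A) ∈ U1
  prefixClosed : ∀ (u : TimedWord A) (x : ℝ≥0 × A), u ++ [x] ∈ U1 → u ∈ U1
  epsE : ([] : TimedWord A) ∈ E
  suffixClosed : ∀ (x : ℝ≥0 × A) (e : TimedWord A), x :: e ∈ E → e ∈ E

/-- The set `U2` of one-letter `Σ_K`-extensions of `U1`. -/
def obsU2 {A : Type} {K : ℕ} (T : ObsTable A K) : Set (TimedWord A) :=
  {w : TimedWord A | ∃ u ∈ T.U1, ∃ (t : ℝ≥0) (a : A), IsSigmaK K t ∧ w = u ++ [(t, a)]}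

/-- `R(u)`: the row of `u` (restricted to `E`) together with `c^K_⊤(u)`. -/
noncomputable def Rof {A : Type} {K : ℕ} (T : ObsTable A K) (u : TimedWord A) :
    ({e : TimedWord A // e ∈ T.E} → Bool) × WithTop ℝ≥0 :=
  (fun e => T.val u e.1, cKTop K u)

/-- The table is closed. -/
def ObsTable.Closed {A : Type} {K : ℕ} (T : ObsTable A K) : Prop :=
  ∀ w ∈ obsU2 T, ∃ u ∈ T.U1, Rof T w = Rof T u

/-- The table is consistent. -/
def ObsTable.Consistent {A : Type} {K : ℕ} (T : ObsTable A K) : Prop :=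
  ∀ u ∈ T.U1, ∀ w ∈ T.U1, Rof T u = Rof T w →
    ∀ (t : ℝ≥0) (a : A), IsSigmaK K t → Rof T (u ++ [(t, a)]) = Rof T (w ++ [(t, a)])

/-- The automaton `A_𝒯` induced by a (closed and consistent) observation table. -/
noncomputable def ATable {A : Type} {K : ℕ} (T : ObsTable A K) : TA A where
  Q := {f : ({e : TimedWord A // e ∈ T.E} → Bool) × WithTop ℝ≥0 // ∃ u ∈ T.U1, f = Rof T u}
  init := ⟨Rof T [], ⟨[], T.epsU1, rfl⟩⟩
  final := {q | ∃ u ∈ T.U1, q.1 = Rof T u ∧ T.val u [] = true}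
  trans := {θ | ∃ u ∈ T.U1, ∃ (t : ℝ≥0) (a : A), IsSigmaK K t ∧
      θ.src.1 = Rof T u ∧ θ.dst.1 = Rof T (u ++ [(t, a)]) ∧ θ.lab = a ∧
      θ.guard = phiOf K (cKW K u + t) ∧
      (θ.reset = true ↔ ∃ m : ℕ, m ≤ K ∧ cKW K u + t = (m : ℝ≥0))}

/-- A `K`-acceptor is consistent with the observation table `𝒯`. -/
def ConsistentWith {A : Type} {K : ℕ} (M : TA A) (T : ObsTable A K) : Prop :=
  ∀ w : TimedWord A, (w ∈ T.U1 ∨ w ∈ obsU2 T) → ∀ e ∈ T.E,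
    ∀ (q : M.Q) (ν : ℝ≥0), Steps M (M.init, 0) (w ++ e) (q, ν) →
      (q ∈ M.final ↔ T.val w e = true)

/-- Isomorphism of one-clock timed automata. -/
structure TAIso {A : Type} (M N : TA A) where
  toEquiv : M.Q ≃ N.Q
  init_eq : toEquiv M.init = N.init
  final_iff : ∀ q : M.Q, q ∈ M.final ↔ toEquiv q ∈ N.final
  trans_iff : ∀ θ : TTrans M.Q A,
    θ ∈ M.trans ↔
      (⟨toEquiv θ.src, toEquiv θ.dst, θ.lab, θ.guard, θ.reset⟩ : TTrans N.Q A) ∈ N.trans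

/-!
Along a run on `w` from `(q, x)` and a run on `τ_{x→x'}(w)` from `(q, x')`, the two clock values
always differ from the two values of `c^K` (the ones `τ` reads) by one and the same natural
number, and those values of `c^K` are region equivalent. The rescaling `f_{λ→λ'}` is designed
so that adding `t` and `t'` preserves this region equivalence, so both clocks always satisfy
the same guards, and since a reset happens only at an integer clock value `≤ K`, the invariant
survives resets too. Hence both runs take the same transitions.
-/

lemma floor_add_fracPart (x : ℝ≥0) : (⌊x⌋₊ : ℝ≥0) + fracPart x = x :=
  add_tsub_cancel_of_le (Nat.floor_le zero_le)

lemma fracPart_lt_one (x : ℝ≥0) : fracPart x < 1 := by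
  rw [fracPart, tsub_lt_iff_left (Nat.floor_le zero_le)]
  exact Nat.lt_floor_add_one x

lemma fracPart_eq_zero_iff (x : ℝ≥0) : fracPart x = 0 ↔ IsNatVal x := by
  refine ⟨fun h => ⟨⌊x⌋₊, ?_⟩, ?_⟩
  · simpa [h] using (floor_add_fracPart x).symm
  · rintro ⟨m, rfl⟩
    simp [fracPart]

lemma fracPart_add_natCast (x : ℝ≥0) (c : ℕ) : fracPart (x + c) = fracPart x := by
  rw [fracPart, fracPart, Nat.floor_add_natCast zero_le, Nat.cast_add,
    add_tsub_add_eq_tsub_right]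

lemma eq_natCast_iff_floor_eq_and_fracPart_eq_zero (x : ℝ≥0) (m : ℕ) :
    x = m ↔ ⌊x⌋₊ = m ∧ fracPart x = 0 := by
  refine ⟨?_, fun ⟨hfl, hfr⟩ => by rw [← floor_add_fracPart x, hfl, hfr, add_zero]⟩
  rintro rfl
  simp [fracPart]

lemma eq_natCast_sub_of_add_natCast_eq {x : ℝ≥0} {c m : ℕ} (h : x + c = m) :
    x = ((m - c : ℕ) : ℝ≥0) := by
  have hc : c ≤ m := by exact_mod_cast h ▸ le_add_self
  rw [Nat.cast_tsub, ← h, add_tsub_cancel_right]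

lemma resetStep_natCast {K m : ℕ} (hm : m ≤ K) : resetStep K m = 0 :=
  if_pos ⟨m, hm, rfl⟩

lemma exists_eq_resetStep_add_natCast (K : ℕ) (x : ℝ≥0) : ∃ c : ℕ, x = resetStep K x + c := by
  unfold resetStep
  split_ifs with h
  · obtain ⟨m, -, rfl⟩ := h
    exact ⟨m, (zero_add _).symm⟩
  · exact ⟨0, by simp⟩

section RegEq

variable {K : ℕ} {u v : ℝ≥0}

lemma regEq_refl (K : ℕ) (u : ℝ≥0) : RegEq K u u := Or.inl ⟨rfl, Iff.rfl⟩

lemma regEq_of_mem_Ioo {n : ℕ} (hu : u ∈ Set.Ioo (n : ℝ≥0) (n + 1))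
    (hv : v ∈ Set.Ioo (n : ℝ≥0) (n + 1)) : RegEq K u v := by
  have floor_eq {x : ℝ≥0} (hx : x ∈ Set.Ioo (n : ℝ≥0) (n + 1)) : ⌊x⌋₊ = n :=
    (Nat.floor_eq_iff zero_le).2 ⟨hx.1.le, hx.2⟩
  have fracPart_ne {x : ℝ≥0} (hx : x ∈ Set.Ioo (n : ℝ≥0) (n + 1)) : fracPart x ≠ 0 := by
    rw [fracPart, floor_eq hx]
    exact (tsub_pos_of_lt hx.1).ne'
  exact Or.inl ⟨by rw [floor_eq hu, floor_eq hv], iff_of_false (fracPart_ne hu) (fracPart_ne hv)⟩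

lemma regEq_add_natCast (h : RegEq K u v) (c : ℕ) : RegEq K (u + c) (v + c) := by
  rcases h with ⟨hfl, hfr⟩ | ⟨hu, hv⟩
  · refine Or.inl ⟨?_, ?_⟩
    · rw [Nat.floor_add_natCast zero_le, Nat.floor_add_natCast zero_le, hfl]
    · rwa [fracPart_add_natCast, fracPart_add_natCast]
  · exact Or.inr ⟨hu.trans_le le_self_add, hv.trans_le le_self_add⟩

lemma RegEq.lt_natCast_iff (h : RegEq K u v) {m : ℕ} (hm : m ≤ K) : u < m ↔ v < m := by
  rcases h with ⟨hfl, -⟩ | ⟨hu, hv⟩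
  · rw [← Nat.floor_lt zero_le, ← Nat.floor_lt zero_le, hfl]
  · have hmK : (m : ℝ≥0) ≤ K := by exact_mod_cast hm
    exact iff_of_false (hu.trans_le' hmK).not_gt (hv.trans_le' hmK).not_gt

lemma RegEq.eq_natCast_iff (h : RegEq K u v) {m : ℕ} (hm : m ≤ K) : u = m ↔ v = m := by
  rcases h with ⟨hfl, hfr⟩ | ⟨hu, hv⟩
  · rw [eq_natCast_iff_floor_eq_and_fracPart_eq_zero, eq_natCast_iff_floor_eq_and_fracPart_eq_zero,
      hfl, hfr]
  · have hmK : (m : ℝ≥0) ≤ K := by exact_mod_cast hm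
    exact iff_of_false (hu.trans_le' hmK).ne' (hv.trans_le' hmK).ne'

lemma CC.sat_iff_of_regEq (h : RegEq K u v) :
    ∀ φ : CC, φ.maxConst ≤ K → (φ.sat u ↔ φ.sat v)
  | .lt _, hm => h.lt_natCast_iff hm
  | .gt m, hm => by
    simp only [CC.sat]
    rw [← not_le, ← not_le, le_iff_lt_or_eq, le_iff_lt_or_eq, h.lt_natCast_iff (m := m) hm,
      h.eq_natCast_iff (m := m) hm]
  | .eq _, hm => h.eq_natCast_iff hm
  | .and φ ψ, hm => by
    rw [CC.maxConst, max_le_iff] at hm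
    exact and_congr (CC.sat_iff_of_regEq h φ hm.1) (CC.sat_iff_of_regEq h ψ hm.2)

lemma RegEq.eq_or_resetStep_eq (h : RegEq K u v) :
    u = v ∨ (resetStep K u = u ∧ resetStep K v = v) := by
  by_cases hu : ∃ m : ℕ, m ≤ K ∧ u = m
  · obtain ⟨m, hm, rfl⟩ := hu
    exact Or.inl ((h.eq_natCast_iff hm).1 rfl).symm
  · refine Or.inr ⟨if_neg hu, if_neg ?_⟩
    rintro ⟨m, hm, rfl⟩
    exact hu ⟨m, hm, (h.eq_natCast_iff hm).2 rfl⟩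

end RegEq

section fScale

variable {lam lam' s : ℝ≥0}

lemma fScale_self (hlam : 0 < lam) : fScale lam lam' lam = lam' := by
  rw [fScale, if_pos le_rfl, div_mul_cancel₀ _ hlam.ne']

lemma fScale_lt_of_lt (hlam : 0 < lam) (hlam' : 0 < lam') (hs : s < lam) :
    fScale lam lam' s < lam' := by
  rw [fScale, if_pos hs.le]
  calc lam' / lam * s < lam' / lam * lam := mul_lt_mul_of_pos_left hs (div_pos hlam' hlam)
    _ = lam' := div_mul_cancel₀ _ hlam.ne'

lemma fScale_mem_Ioo_of_lt (hlam' : lam' < 1) (hs : lam < s) (hs1 : s < 1) :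
    fScale lam lam' s ∈ Set.Ioo lam' 1 := by
  rw [fScale, if_neg hs.not_ge]
  have hpos : 0 < 1 - lam := tsub_pos_of_lt (hs.trans hs1)
  have hpos' : 0 < 1 - lam' := tsub_pos_of_lt hlam'
  have hslope : (1 - lam') / (1 - lam) * (s - lam) < 1 - lam' := by
    calc (1 - lam') / (1 - lam) * (s - lam) < (1 - lam') / (1 - lam) * (1 - lam) :=
          mul_lt_mul_of_pos_left (tsub_lt_tsub_right_of_le hs.le hs1) (div_pos hpos' hpos)
      _ = 1 - lam' := div_mul_cancel₀ _ hpos.ne'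
  refine ⟨lt_add_of_pos_right _ (mul_pos (div_pos hpos' hpos) (tsub_pos_of_lt hs)), ?_⟩
  calc lam' + (1 - lam') / (1 - lam) * (s - lam) < lam' + (1 - lam') := by gcongr
    _ = 1 := add_tsub_cancel_of_le hlam'.le

end fScale

/-- `f_{1-a→1-a'}` sends the fractional delay at which `a + s` reaches `1` to the one at which
`a' + s` does, and preserves the order on either side of it. -/
lemma regEq_add_fScale (K : ℕ) {a a' s : ℝ≥0} (ha : a ∈ Set.Ioo 0 1) (ha' : a' ∈ Set.Ioo 0 1)
    (hs : s < 1) : RegEq K (a + s) (a' + fScale (1 - a) (1 - a') s) := by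
  have hlam : 0 < 1 - a := tsub_pos_of_lt ha.2
  have hlam' : 0 < 1 - a' := tsub_pos_of_lt ha'.2
  rcases lt_trichotomy s (1 - a) with hlt | rfl | hgt
  · have hf := fScale_lt_of_lt hlam hlam' hlt
    refine regEq_of_mem_Ioo (n := 0) ?_ ?_ <;> rw [Nat.cast_zero, zero_add]
    · exact ⟨ha.1.trans_le le_self_add, lt_tsub_iff_left.1 hlt⟩
    · exact ⟨ha'.1.trans_le le_self_add, lt_tsub_iff_left.1 hf⟩
  · rw [fScale_self hlam, add_tsub_cancel_of_le ha.2.le, add_tsub_cancel_of_le ha'.2.le]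
    exact regEq_refl K 1
  · have hf := fScale_mem_Ioo_of_lt (tsub_lt_self one_pos ha'.1) hgt hs
    refine regEq_of_mem_Ioo (n := 1) ?_ ?_ <;> rw [Nat.cast_one]
    · exact ⟨(tsub_lt_iff_left ha.2.le).1 hgt, add_lt_add ha.2 hs⟩
    · exact ⟨(tsub_lt_iff_left ha'.2.le).1 hf.1, add_lt_add ha'.2 hf.2⟩

lemma regEq_add_tauStep {K : ℕ} {y y' : ℝ≥0} (h : RegEq K y y') (t : ℝ≥0) :
    RegEq K (y + t) (y' + tauStep K y y' t) := by
  unfold tauStep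
  split_ifs with hid
  · rcases h with ⟨hfl, -⟩ | ⟨hy, hy'⟩
    · rcases hid with ⟨⟨m, rfl⟩, ⟨m', rfl⟩⟩ | ⟨hy, hy'⟩
      · obtain rfl : m = m' := by simpa using hfl
        exact regEq_refl K _
      · exact Or.inr ⟨hy.trans_le le_self_add, hy'.trans_le le_self_add⟩
    · exact Or.inr ⟨hy.trans_le le_self_add, hy'.trans_le le_self_add⟩
  · rcases h with ⟨hfl, hfr⟩ | hgt
    · have ha : fracPart y ≠ 0 := fun h0 => hid (Or.inl
        ⟨(fracPart_eq_zero_iff y).1 h0, (fracPart_eq_zero_iff y').1 (hfr.1 h0)⟩)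
      have ha' : fracPart y' ≠ 0 := fun h0 => ha (hfr.2 h0)
      have key := regEq_add_fScale K ⟨pos_iff_ne_zero.2 ha, fracPart_lt_one y⟩
        ⟨pos_iff_ne_zero.2 ha', fracPart_lt_one y'⟩ (fracPart_lt_one t)
      generalize fScale (1 - fracPart y) (1 - fracPart y') (fracPart t) = g at key ⊢
      have hdecomp : y + t = fracPart y + fracPart t + ((⌊y⌋₊ + ⌊t⌋₊ : ℕ) : ℝ≥0) := by
        conv_lhs => rw [← floor_add_fracPart y, ← floor_add_fracPart t]
        push_cast
        ring
      have hdecomp' : y' + ((⌊t⌋₊ : ℝ≥0) + g) = fracPart y' + g + ((⌊y⌋₊ + ⌊t⌋₊ : ℕ) : ℝ≥0) := by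
        conv_lhs => rw [← floor_add_fracPart y', ← hfl]
        push_cast
        ring
      rw [hdecomp, hdecomp']
      exact regEq_add_natCast key _
    · exact absurd (Or.inr hgt) hid

/-- `ν, ν'` are the clock values of the two runs, `y, y'` the values of `c^K` that `τ` reads. -/
def TauInv (K : ℕ) (ν ν' y y' : ℝ≥0) : Prop :=
  ∃ c : ℕ, ν = y + c ∧ ν' = y' + c ∧ RegEq K y y'

lemma tauInv_resetStep {K : ℕ} {u u' : ℝ≥0} (h : RegEq K u u') (c : ℕ) :
    TauInv K (u + c) (u' + c) (resetStep K u) (resetStep K u') := by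
  rcases h.eq_or_resetStep_eq with rfl | ⟨hu, hu'⟩
  · obtain ⟨d, hd⟩ := exists_eq_resetStep_add_natCast K u
    refine ⟨d + c, ?_, ?_, regEq_refl K _⟩ <;> rw [Nat.cast_add, ← add_assoc, ← hd]
  · exact ⟨c, by rw [hu], by rw [hu'], by rwa [hu, hu']⟩

namespace TauInv

variable {K : ℕ} {ν ν' y y' : ℝ≥0}

lemma regEq_add (h : TauInv K ν ν' y y') (t : ℝ≥0) :
    RegEq K (ν + t) (ν' + tauStep K y y' t) := by
  obtain ⟨c, rfl, rfl, hy⟩ := h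
  rw [add_right_comm y, add_right_comm y']
  exact regEq_add_natCast (regEq_add_tauStep hy t) c

lemma next (h : TauInv K ν ν' y y') (t : ℝ≥0) (r : Bool)
    (hr : r = true → ∃ m ≤ K, ν + t = m) :
    TauInv K (if r then 0 else ν + t) (if r then 0 else ν' + tauStep K y y' t)
      (resetStep K (y + t)) (resetStep K (y' + tauStep K y y' t)) := by
  have hν := h.regEq_add t
  obtain ⟨c, rfl, rfl, hy⟩ := h
  have hyt := regEq_add_tauStep hy t
  cases r
  · simp only [Bool.false_eq_true, if_false]
    rw [add_right_comm y, add_right_comm y']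
    exact tauInv_resetStep hyt c
  · obtain ⟨m, hm, hyc⟩ := hr rfl
    have hyc' : y' + c + tauStep K y y' t = m := (hν.eq_natCast_iff hm).1 hyc
    rw [add_right_comm] at hyc hyc'
    have hk : m - c ≤ K := (Nat.sub_le m c).trans hm
    rw [eq_natCast_sub_of_add_natCast_eq hyc, eq_natCast_sub_of_add_natCast_eq hyc',
      resetStep_natCast hk]
    exact ⟨0, by simp, by simp, regEq_refl K 0⟩

end TauInv

lemma tauInv_resetStep_self {K : ℕ} {x x' : ℝ≥0} (h : RegEq K x x') :
    TauInv K x x' (resetStep K x) (resetStep K x') := by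
  simpa using tauInv_resetStep h 0

namespace TA

variable {A : Type} (M : TA A)

lemma nil_mem_langFrom_iff (c : M.Q × ℝ≥0) : [] ∈ M.LangFrom c ↔ c.1 ∈ M.final := by
  refine ⟨?_, fun h => ⟨c.1, c.2, Steps.nil c, h⟩⟩
  rintro ⟨q', ν', hs, hq'⟩
  cases hs
  exact hq'

lemma cons_mem_langFrom_iff (q : M.Q) (ν t : ℝ≥0) (a : A) (w : TimedWord A) :
    (t, a) :: w ∈ M.LangFrom (q, ν) ↔ ∃ θ ∈ M.trans, θ.src = q ∧ θ.lab = a ∧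
      θ.guard.sat (ν + t) ∧ w ∈ M.LangFrom (θ.dst, if θ.reset then 0 else ν + t) := by
  constructor
  · rintro ⟨q', ν', hs, hq'⟩
    cases hs with
    | cons θ hθ hsrc hlab hg hrest => exact ⟨θ, hθ, hsrc, hlab, hg, q', ν', hrest, hq'⟩
  · rintro ⟨θ, hθ, hsrc, hlab, hg, q', ν', hrest, hq'⟩
    exact ⟨q', ν', Steps.cons θ hθ hsrc hlab hg hrest, hq'⟩

variable {M}

lemma exists_eq_natCast_of_reset {K : ℕ} (hI : M.IsIRTA) (hM : M.MaxConstLE K)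
    {θ : TTrans M.Q A} (hθ : θ ∈ M.trans) (hr : θ.reset = true) {v : ℝ≥0}
    (hg : θ.guard.sat v) : ∃ m ≤ K, v = m := by
  obtain ⟨m, hm⟩ := hI θ hθ hr
  have hmK := hM θ hθ
  rw [hm] at hg hmK
  exact ⟨m, hmK, hg⟩

theorem mem_langFrom_iff_tauWAux_mem {K : ℕ} (hI : M.IsIRTA) (hM : M.MaxConstLE K)
    (w : TimedWord A) {q : M.Q} {ν ν' y y' : ℝ≥0} (h : TauInv K ν ν' y y') :
    w ∈ M.LangFrom (q, ν) ↔ tauWAux K y y' w ∈ M.LangFrom (q, ν') := by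
  induction w generalizing q ν ν' y y' with
  | nil => simp only [tauWAux, nil_mem_langFrom_iff]
  | cons p w ih =>
    obtain ⟨t, a⟩ := p
    simp only [tauWAux, cons_mem_langFrom_iff]
    refine exists_congr fun θ => and_congr_right fun hθ =>
      and_congr_right fun _ => and_congr_right fun _ => ?_
    rw [← CC.sat_iff_of_regEq (h.regEq_add t) θ.guard (hM θ hθ)]
    exact and_congr_right fun hg =>
      ih (h.next t θ.reset fun hr => exists_eq_natCast_of_reset hI hM hθ hr hg)

end TA

theorem statement7_general {A : Type} (K : ℕ) (B : TA A) (hB : IsKAcceptor B K)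
    (q : B.Q) (x x' : ℝ≥0) (hxx' : RegEq K x x') :
    ∀ w : TimedWord A, w ∈ B.LangFrom (q, x) ↔ tauW K x x' w ∈ B.LangFrom (q, x') :=
  fun w => TA.mem_langFrom_iff_tauWAux_mem hB.2.2.2.1 hB.2.2.2.2.2.1 w
    (tauInv_resetStep_self hxx')

/-- for a `K`-acceptor, `w ∈ L(q,x)` iff `τ_{x→x'}(w) ∈ L(q,x')`. -/
theorem statement7 {A : Type} [Finite A] (K : ℕ) (B : TA A) (hB : IsKAcceptor B K)
    (q : B.Q) (x x' : ℝ≥0) (hxx' : RegEq K x x') :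
    ∀ w : TimedWord A, w ∈ B.LangFrom (q, x) ↔ tauW K x x' w ∈ B.LangFrom (q, x') :=
  statement7_general K B hB q x x' hxx'

end IRTA
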